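/- Let 0 < θ ≤ π/2 and k a nonnegative integer, and consider a Bernoulli random variable with success probability π(θ) = sin²((1+2k)θ) observed ℓ times independently, parametrized by p = sin²θ. Then, with q(p) := sin²((1+2k)·arcsin(√p)), at any p where sin²((1+2k)θ) ∉ {0,1} the single-sample Fisher information I(p) = (dq/dp)²·(1/q + 1/(1−q)) satisfies I(p) = (1+2k)²/(p(1−p)), and hence the Fisher information of the ℓ-sample experiment with respect to the parameter p equals ℓ(1+2k)²/(p(1−p)). -/

import Mathlib

/-- Fisher information of the iterated-Grover Bernoulli experiment (eq. (10)):
    with q(p) = sin²((1+2k)·arcsin√p), the ℓ-sample Fisher information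
    ℓ·q'(p)²·(1/q + 1/(1−q)) equals ℓ(1+2k)²/(p(1−p)) wherever q(p) ∉ {0,1}. -/
theorem grover_fisher_information
    (k ℓ : ℕ) (p : ℝ) (hp0 : 0 < p) (hp1 : p < 1)
    (q : ℝ → ℝ)
    (hq : ∀ s : ℝ, q s = Real.sin ((1 + 2*(k:ℝ)) * Real.arcsin (Real.sqrt s)) ^ 2)
    (hq0 : q p ≠ 0) (hq1 : q p ≠ 1) :
    ∃ d : ℝ, HasDerivAt q d p ∧
      (ℓ : ℝ) * d^2 * (1 / q p + 1 / (1 - q p)) =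
        (ℓ : ℝ) * (1 + 2*(k:ℝ))^2 / (p * (1 - p)) := by
  set c : ℝ := 1 + 2*(k:ℝ) with hc
  set θ : ℝ := Real.arcsin (Real.sqrt p) with hθ
  have hsp : Real.sqrt p < 1 := by
    rw [show (1:ℝ) = Real.sqrt 1 by simp]
    exact Real.sqrt_lt_sqrt (le_of_lt hp0) hp1
  have hsp0 : 0 < Real.sqrt p := Real.sqrt_pos.mpr hp0
  have h1 : HasDerivAt Real.sqrt (1 / (2 * Real.sqrt p)) p :=
    Real.hasDerivAt_sqrt (ne_of_gt hp0)
  have h2 : HasDerivAt Real.arcsin (1 / Real.sqrt (1 - (Real.sqrt p)^2)) (Real.sqrt p) :=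
    Real.hasDerivAt_arcsin (by linarith) (ne_of_lt hsp)
  have hsq : (Real.sqrt p)^2 = p := Real.sq_sqrt (le_of_lt hp0)
  have h2' : HasDerivAt Real.arcsin (1 / Real.sqrt (1 - p)) (Real.sqrt p) := by
    rwa [hsq] at h2
  have h3 : HasDerivAt (fun s => Real.arcsin (Real.sqrt s))
      (1 / Real.sqrt (1 - p) * (1 / (2 * Real.sqrt p))) p := h2'.comp p h1
  have h4 : HasDerivAt (fun s => c * Real.arcsin (Real.sqrt s))
      (c * (1 / Real.sqrt (1 - p) * (1 / (2 * Real.sqrt p)))) p := h3.const_mul c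
  have h5 : HasDerivAt (fun s => Real.sin (c * Real.arcsin (Real.sqrt s)))
      (Real.cos (c * θ) * (c * (1 / Real.sqrt (1 - p) * (1 / (2 * Real.sqrt p))))) p :=
    by have := (Real.hasDerivAt_sin (c * θ)).comp p h4; exact this
  set d : ℝ := 2 * Real.sin (c * θ) *
      (Real.cos (c * θ) * (c * (1 / Real.sqrt (1 - p) * (1 / (2 * Real.sqrt p))))) with hd
  have h6 : HasDerivAt (fun s => Real.sin (c * Real.arcsin (Real.sqrt s)) ^ 2) d p := by
    have := h5.fun_pow 2
    simpa [hd, mul_comm, mul_assoc, mul_left_comm] using this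
  have hqd : HasDerivAt q d p := by
    have : q = fun s => Real.sin (c * Real.arcsin (Real.sqrt s)) ^ 2 := funext hq
    rw [this]; exact h6
  refine ⟨d, hqd, ?_⟩
  have hqp : q p = Real.sin (c * θ) ^ 2 := hq p
  have hcos : Real.cos (c * θ) ^ 2 = 1 - q p := by
    rw [hqp]; nlinarith [Real.sin_sq_add_cos_sq (c * θ)]
  have hs0 : Real.sin (c * θ) ≠ 0 := by
    intro h; apply hq0; rw [hqp, h]; ring
  have hc0 : Real.cos (c * θ) ≠ 0 := by
    intro h; apply hq1; have := hcos; rw [h] at this; nlinarith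
  have hs1p : Real.sqrt (1 - p) ^ 2 = 1 - p := Real.sq_sqrt (by linarith)
  have hs1p0 : Real.sqrt (1 - p) ≠ 0 := by
    intro h
    have : (1:ℝ) - p = 0 := by rw [← hs1p, h]; ring
    linarith
  have hrw : 1 - Real.sin (c * θ) ^ 2 = Real.cos (c * θ) ^ 2 := by
    nlinarith [Real.sin_sq_add_cos_sq (c * θ)]
  rw [hqp, hd, hrw]
  have hp1' : (1:ℝ) - p ≠ 0 := by linarith
  have hexp2 : Real.sqrt (1-p)^2 * Real.sqrt p^2 = p * (1-p) := by
    rw [hs1p, hsq]; ring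
  field_simp
  linear_combination (-((ℓ:ℝ)*c^2)) * hexp2 + ((ℓ:ℝ)*c^2*p*(1-p)) * Real.sin_sq_add_cos_sq (c*θ)
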